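/- Let (A, {R_α}_{α∈Ω}) be a Rota-Baxter family algebra. Let C_R denote the cochain complex with C_Rⁿ := Hom_Ω(A^{⊗(n−1)}, A) (n ≥ 2, and C_R¹ := 0) and differential d_R; let C_RBf denote the complex with C_RBf¹ := Hom(A,A), C_RBfⁿ := Hom(A^{⊗n}, A) ⊕ Hom_Ω(A^{⊗(n−1)}, A) (n ≥ 2) and differential δ_RBf; and let C_Hoch denote the Hochschild complex C_Hochⁿ := Hom(A^{⊗n}, A) with differential δ_Hoch. Then the maps i(γ) := (0, γ) and p(f, γ) := f (and p(f) := f in degree 1) are morphisms of cochain complexes, the sequence 0 → C_R → C_RBf → C_Hoch → 0 is degreewise short exact, and consequently there is a long exact sequence of cohomology groups ⋯ → H^{n−1}_R(A,A) → Hⁿ_RBf(A, {R_α}) → Hⁿ_Hoch(A,A) → Hⁿ_R(A,A) → ⋯. -/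
import Mathlib


variable {k : Type*} [Field k] [CharZero k]
variable {Ω : Type*} [Semigroup Ω]
variable {A : Type*} [NonUnitalRing A] [Module k A] [SMulCommClass k A A] [IsScalarTower k A A]

/-- Replace the block of `n` consecutive entries of `v` starting at position `i`
(0-indexed) by the single entry `x`. -/
def collapseAt {X : Type*} (v : ℕ → X) (i n : ℕ) (x : X) : ℕ → X :=
  fun j => if j < i then v j else if j = i then x else v (j + n - 1)

/-- `prodSeg α i n = α i * α (i+1) * ⋯ * α (i+n)`, the product of `n+1`
consecutive labels in the semigroup `Ω`. -/
def prodSeg {Ω : Type*} [Mul Ω] (α : ℕ → Ω) : ℕ → ℕ → Ω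
  | i, 0 => α i
  | i, n + 1 => α i * prodSeg α (i + 1) n

/-- `f` encodes an `n`-multilinear map `V^{⊗n} → W`. -/
def IsSeqMulti (k : Type*) [Field k] {V W : Type*} [AddCommGroup V] [Module k V]
    [AddCommGroup W] [Module k W] (n : ℕ) (f : (ℕ → V) → W) : Prop :=
  (∀ (v v' : ℕ → V), (∀ t, t < n → v t = v' t) → f v = f v') ∧
  (∀ (v : ℕ → V) (t : ℕ), t < n → ∀ x y : V,
      f (Function.update v t (x + y))
        = f (Function.update v t x) + f (Function.update v t y)) ∧
  (∀ (v : ℕ → V) (t : ℕ), t < n → ∀ (c : k) (x : V),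
      f (Function.update v t (c • x)) = c • f (Function.update v t x))

/-- `f` encodes a collection, indexed by `Ω^n`, of `n`-multilinear maps
`V^{⊗n} → W`. -/
def IsFamMulti (k : Type*) [Field k] {Ω V W : Type*}
    [AddCommGroup V] [Module k V] [AddCommGroup W] [Module k W]
    (n : ℕ) (f : (ℕ → Ω) → (ℕ → V) → W) : Prop :=
  (∀ (α α' : ℕ → Ω) (v v' : ℕ → V),
      (∀ t, t < n → α t = α' t) → (∀ t, t < n → v t = v' t) → f α v = f α' v') ∧
  (∀ (α : ℕ → Ω) (v : ℕ → V) (t : ℕ), t < n → ∀ x y : V,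
      f α (Function.update v t (x + y))
        = f α (Function.update v t x) + f α (Function.update v t y)) ∧
  (∀ (α : ℕ → Ω) (v : ℕ → V) (t : ℕ), t < n → ∀ (c : k) (x : V),
      f α (Function.update v t (c • x)) = c • f α (Function.update v t x))

/-- The Hochschild differential of an `n`-cochain `f ∈ Hom(A^{⊗n}, A)`
(with coefficients in the adjoint bimodule); 0-indexed. -/
noncomputable def hochD (n : ℕ) (f : (ℕ → A) → A) : (ℕ → A) → A :=
  fun a =>
    a 0 * f (fun t => a (1 + t))
    + ∑ i ∈ Finset.range n, ((-1 : ℤ) ^ (i + 1)) •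
        f (collapseAt a i 2 (a i * a (i + 1)))
    + ((-1 : ℤ) ^ (n + 1)) • (f a * a n)

/-- The map `h_R : Hom(A^{⊗n}, A) → Hom_Ω(A^{⊗n}, A)` of a Rota-Baxter family
algebra `(A, {R_α})`. -/
noncomputable def hRmap (R : Ω → A →ₗ[k] A) (n : ℕ) (f : (ℕ → A) → A) :
    (ℕ → Ω) → (ℕ → A) → A :=
  fun α a => ((-1 : ℤ) ^ n) •
    (f (fun t => R (α t) (a t))
     - ∑ r ∈ Finset.range n,
         R (prodSeg α 0 (n - 1))
           (f (Function.update (fun t => R (α t) (a t)) r (a r))))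

/-- The differential `d_R` on `Hom_Ω(A^{⊗n}, A)` induced by the family
`R = {R_α}` (0-indexed). -/
noncomputable def dRfam (R : Ω → A →ₗ[k] A) (n : ℕ)
    (γ : (ℕ → Ω) → (ℕ → A) → A) : (ℕ → Ω) → (ℕ → A) → A :=
  fun α a =>
    R (α 0) (a 0) * γ (fun t => α (1 + t)) (fun t => a (1 + t))
    - R (prodSeg α 0 n) (a 0 * γ (fun t => α (1 + t)) (fun t => a (1 + t)))
    + ∑ i ∈ Finset.range n, ((-1 : ℤ) ^ (i + 1)) •
        γ (collapseAt α i 2 (α i * α (i + 1)))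
          (collapseAt a i 2
            (R (α i) (a i) * a (i + 1) + a i * R (α (i + 1)) (a (i + 1))))
    + ((-1 : ℤ) ^ (n + 1)) • (γ α a * R (α n) (a n))
    - ((-1 : ℤ) ^ (n + 1)) • R (prodSeg α 0 n) (γ α a * a n)

/-- The differential of the Rota-Baxter family cochain complex in degrees
`n ≥ 2`, on pairs `(f, γ) ∈ Hom(A^{⊗n}, A) ⊕ Hom_Ω(A^{⊗(n-1)}, A)`. -/
noncomputable def dRBf (R : Ω → A →ₗ[k] A) (n : ℕ)
    (x : ((ℕ → A) → A) × ((ℕ → Ω) → (ℕ → A) → A)) :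
    ((ℕ → A) → A) × ((ℕ → Ω) → (ℕ → A) → A) :=
  (hochD n x.1, fun α a => dRfam R (n - 1) x.2 α a + hRmap R n x.1 α a)

/-- degree-`n` coboundaries of the Hochschild complex `{Hom(A^{⊗•}, A), δ_Hoch}`
(the complex starts in degree `1`, so degree-`1` coboundaries vanish). -/
def IsCobHoch (n : ℕ) (f : (ℕ → A) → A) : Prop :=
  match n with
  | m + 2 => ∃ g : (ℕ → A) → A, IsSeqMulti k (m + 1) g ∧ f = hochD (m + 1) g
  | _ => f = 0

/-- arity-`n` coboundaries of the complex `{Hom_Ω(A^{⊗•}, A), d_R}` (which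
starts in arity `1`, so arity-`1` coboundaries vanish). -/
def IsCobFam (R : Ω → A →ₗ[k] A) (n : ℕ) (γ : (ℕ → Ω) → (ℕ → A) → A) : Prop :=
  match n with
  | m + 2 => ∃ γ' : (ℕ → Ω) → (ℕ → A) → A,
      IsFamMulti k (m + 1) γ' ∧ γ = dRfam R (m + 1) γ'
  | _ => γ = 0

/-- degree-`n` coboundaries (`n ≥ 2`) of the Rota-Baxter family complex
`C_RBf` (with `C¹ = Hom(A,A)` and `Cⁿ = Hom(A^{⊗n},A) ⊕ Hom_Ω(A^{⊗(n-1)},A)`). -/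
def IsCobRBf (R : Ω → A →ₗ[k] A) (n : ℕ)
    (x : ((ℕ → A) → A) × ((ℕ → Ω) → (ℕ → A) → A)) : Prop :=
  match n with
  | 2 => ∃ f' : (ℕ → A) → A,
      IsSeqMulti k 1 f' ∧ x.1 = hochD 1 f' ∧ x.2 = hRmap R 1 f'
  | m + 3 => ∃ (f' : (ℕ → A) → A) (γ' : (ℕ → Ω) → (ℕ → A) → A),
      IsSeqMulti k (m + 2) f' ∧ IsFamMulti k (m + 1) γ' ∧
      x.1 = hochD (m + 2) f' ∧
      x.2 = fun α a => dRfam R (m + 1) γ' α a + hRmap R (m + 2) f' α a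
  | _ => x.1 = 0 ∧ x.2 = 0


set_option linter.unusedSectionVars false

section Aux

open Finset Function

variable {R : Ω → A →ₗ[k] A}

/-! ### collapseAt / update / shift lemmas -/

lemma collapseAt_lt {X : Type*} (v : ℕ → X) (i : ℕ) (x : X) {j : ℕ} (h : j < i) :
    collapseAt v i 2 x j = v j := by simp [collapseAt, h]

lemma collapseAt_self {X : Type*} (v : ℕ → X) (i : ℕ) (x : X) :
    collapseAt v i 2 x i = x := by simp [collapseAt]

lemma collapseAt_gt {X : Type*} (v : ℕ → X) (i : ℕ) (x : X) {j : ℕ} (h : i < j) :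
    collapseAt v i 2 x j = v (j + 1) := by
  simp only [collapseAt]
  split_ifs <;> first | rfl | omega | (congr 1; omega)

lemma collapseAt_update_left {X : Type*} (v : ℕ → X) (i : ℕ) (x y : X) {r : ℕ} (h : r < i) :
    collapseAt (Function.update v r y) i 2 x = Function.update (collapseAt v i 2 x) r y := by
  funext j
  simp only [collapseAt, Function.update_apply]
  split_ifs <;> first | rfl | omega | (congr 1; omega)

lemma collapseAt_update_right {X : Type*} (v : ℕ → X) (i : ℕ) (x y : X) {r : ℕ} (h : i + 1 < r) :
    collapseAt (Function.update v r y) i 2 x = Function.update (collapseAt v i 2 x) (r - 1) y := by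
  funext j
  simp only [collapseAt, Function.update_apply]
  split_ifs <;> first | rfl | omega | (congr 1; omega)

lemma collapseAt_update_eq {X : Type*} (v : ℕ → X) (i : ℕ) (x y : X) :
    collapseAt (Function.update v i y) i 2 x = collapseAt v i 2 x := by
  funext j
  simp only [collapseAt, Function.update_apply]
  split_ifs <;> first | rfl | omega | (congr 1; omega)

lemma collapseAt_update_succ {X : Type*} (v : ℕ → X) (i : ℕ) (x y : X) :
    collapseAt (Function.update v (i + 1) y) i 2 x = collapseAt v i 2 x := by
  funext j
  simp only [collapseAt, Function.update_apply]
  split_ifs <;> first | rfl | omega | (congr 1; omega)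

/-- updating position `i` of a collapsed-at-`i` vector just changes the inserted value -/
lemma update_collapseAt {X : Type*} (v : ℕ → X) (i : ℕ) (x y : X) :
    Function.update (collapseAt v i 2 x) i y = collapseAt v i 2 y := by
  funext j
  simp only [collapseAt, Function.update_apply]
  split_ifs <;> first | rfl | omega | (congr 1; omega)

lemma shift_update {X : Type*} (v : ℕ → X) (r : ℕ) (x : X) :
    (fun t => Function.update v (r + 1) x (1 + t)) = Function.update (fun t => v (1 + t)) r x := by
  funext t
  simp only [Function.update_apply]
  split_ifs <;> first | rfl | omega | (congr 1; omega)

lemma shift_update_zero {X : Type*} (v : ℕ → X) (x : X) :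
    (fun t => Function.update v 0 x (1 + t)) = fun t => v (1 + t) := by
  funext t; rw [Function.update_of_ne (by omega)]

lemma shift_collapseAt {X : Type*} (v : ℕ → X) (i : ℕ) (x : X) :
    (fun t => collapseAt v (i + 1) 2 x (1 + t)) = collapseAt (fun t => v (1 + t)) i 2 x := by
  funext t
  simp only [collapseAt]
  split_ifs <;> first | rfl | omega | (congr 1; omega)

/-- composing `R` with a collapsed pair of vectors -/
lemma R_comp_collapseAt (α : ℕ → Ω) (a : ℕ → A) (i : ℕ) (ω : Ω) (x : A) :
    (fun t => R (collapseAt α i 2 ω t) (collapseAt a i 2 x t))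
      = collapseAt (fun t => R (α t) (a t)) i 2 (R ω x) := by
  funext t
  simp only [collapseAt]
  split_ifs <;> rfl

lemma R_comp_update (α : ℕ → Ω) (a : ℕ → A) (r : ℕ) (x : A) :
    (fun t => R (α t) (Function.update a r x t))
      = Function.update (fun t => R (α t) (a t)) r (R (α r) x) := by
  funext t
  rcases eq_or_ne t r with rfl | ht
  · rw [Function.update_self, Function.update_self]
  · rw [Function.update_of_ne ht, Function.update_of_ne ht]

/-! ### prodSeg lemmas -/

lemma prodSeg_shift (α : ℕ → Ω) (c : ℕ) : ∀ (n i : ℕ),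
    prodSeg (fun t => α (c + t)) i n = prodSeg α (c + i) n
  | 0, i => rfl
  | n + 1, i => by
      have h : c + (i + 1) = c + i + 1 := by omega
      rw [prodSeg, prodSeg, prodSeg_shift α c n (i + 1), h]

lemma prodSeg_shift1 (α : ℕ → Ω) (n : ℕ) :
    prodSeg (fun t => α (1 + t)) 0 n = prodSeg α 1 n := by
  rw [prodSeg_shift α 1 n 0]

lemma prodSeg_succ_right (α : ℕ → Ω) : ∀ (n i : ℕ),
    prodSeg α i (n + 1) = prodSeg α i n * α (i + n + 1)
  | 0, i => rfl
  | n + 1, i => by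
      rw [prodSeg, prodSeg_succ_right α n (i + 1), prodSeg, mul_assoc]
      congr 3
      omega

lemma prodSeg_congr (α α' : ℕ → Ω) : ∀ (n i : ℕ), (∀ t, i ≤ t → t ≤ i + n → α t = α' t) →
    prodSeg α i n = prodSeg α' i n
  | 0, i, h => h i le_rfl (by omega)
  | n + 1, i, h => by
      rw [prodSeg, prodSeg, h i le_rfl (by omega),
        prodSeg_congr α α' n (i + 1) (fun t h1 h2 => h t (by omega) (by omega))]

lemma prodSeg_collapse (α : ℕ → Ω) : ∀ (i n : ℕ), i ≤ n →
    prodSeg (collapseAt α i 2 (α i * α (i + 1))) 0 n = prodSeg α 0 (n + 1)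
  | 0, n, _ => by
      cases n with
      | zero => rfl
      | succ s =>
          have h1 : prodSeg (collapseAt α 0 2 (α 0 * α (0 + 1))) 1 s
              = prodSeg (fun t => collapseAt α 0 2 (α 0 * α (0 + 1)) (1 + t)) 0 s := by
            rw [prodSeg_shift1]
          have h2 : (fun t => collapseAt α 0 2 (α 0 * α (0 + 1)) (1 + t))
              = (fun t => α (2 + t)) := by
            funext t
            rw [collapseAt_gt _ _ _ (by omega)]
            congr 1; omega
          have h3 : prodSeg (fun t => α (2 + t)) 0 s = prodSeg α 2 s := by
            rw [prodSeg_shift α 2 s 0]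
          show collapseAt α 0 2 (α 0 * α (0 + 1)) 0 * prodSeg (collapseAt α 0 2 (α 0 * α (0+1))) 1 s
              = α 0 * (α 1 * prodSeg α 2 s)
          rw [h1, h2, h3, collapseAt_self, mul_assoc]
  | i + 1, n, h => by
      obtain ⟨s, rfl⟩ : ∃ s, n = s + 1 := ⟨n - 1, by omega⟩
      set c := collapseAt α (i + 1) 2 (α (i + 1) * α (i + 1 + 1)) with hc
      show c 0 * prodSeg c 1 (s) = α 0 * prodSeg α 1 (s + 1)
      have h0 : c 0 = α 0 := collapseAt_lt _ _ _ (by omega)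
      have h1 : prodSeg c 1 s = prodSeg (fun t => c (1 + t)) 0 s := by rw [prodSeg_shift1]
      have h2 : (fun t => c (1 + t))
          = collapseAt (fun t => α (1 + t)) i 2
              ((fun t => α (1 + t)) i * (fun t => α (1 + t)) (i + 1)) := by
        funext t
        rw [hc]
        simp only [collapseAt]
        split_ifs <;>
          first | rfl | omega | (congr 1; omega) | (congr 1 <;> (congr 1; omega))
      have h4 : prodSeg (fun t => α (1 + t)) 0 (s + 1) = prodSeg α 1 (s + 1) :=
        prodSeg_shift1 α (s + 1)
      rw [h0, h1, h2, prodSeg_collapse (fun t => α (1 + t)) i s (by omega), h4]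

end Aux

section Aux2

open Finset Function

variable (R : Ω → A →ₗ[k] A)

lemma hochD_zero (n : ℕ) : hochD (A := A) n 0 = 0 := by
  funext a
  simp [hochD]

lemma hochD_zero' (n : ℕ) : hochD (A := A) n (fun _ => 0) = 0 := by
  funext a
  simp [hochD]

lemma hRmap_zero (n : ℕ) : hRmap R n 0 = 0 := by
  funext α a
  simp [hRmap]

lemma dRfam_zero_fun (n : ℕ) : dRfam R n (fun _ _ => (0 : A)) = fun _ _ => 0 := by
  funext α a
  simp [dRfam]

lemma hRmap_add_pt (n : ℕ) (f₁ f₂ : (ℕ → A) → A) (α : ℕ → Ω) (a : ℕ → A) :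
    hRmap R n (fun v => f₁ v + f₂ v) α a = hRmap R n f₁ α a + hRmap R n f₂ α a := by
  simp only [hRmap, map_add, Finset.sum_add_distrib]
  rw [← smul_add]
  congr 1
  abel

lemma dRfam_sub_pt (n : ℕ) (γ₁ γ₂ : (ℕ → Ω) → (ℕ → A) → A) (α : ℕ → Ω) (a : ℕ → A) :
    dRfam R n (fun α' a' => γ₁ α' a' - γ₂ α' a') α a = dRfam R n γ₁ α a - dRfam R n γ₂ α a := by
  simp only [dRfam, mul_sub, sub_mul, map_sub, smul_sub, Finset.sum_sub_distrib]
  abel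

lemma dRfam_neg_pt (n : ℕ) (γ : (ℕ → Ω) → (ℕ → A) → A) (α : ℕ → Ω) (a : ℕ → A) :
    dRfam R n (fun α' a' => -γ α' a') α a = -dRfam R n γ α a := by
  simp only [dRfam, mul_neg, neg_mul, map_neg, smul_neg, Finset.sum_neg_distrib]
  abel

/-! ### multilinearity closure -/

lemma isSeqMulti_zero (n : ℕ) : IsSeqMulti k (V := A) (W := A) n (fun _ => 0) :=
  ⟨fun _ _ _ => rfl, fun _ _ _ _ _ => by simp, fun _ _ _ _ _ => by simp⟩

lemma isFamMulti_zero {n : ℕ} : IsFamMulti k (Ω := Ω) (V := A) (W := A) n (fun _ _ => 0) :=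
  ⟨fun _ _ _ _ _ _ => rfl, fun _ _ _ _ _ _ => by simp, fun _ _ _ _ _ _ => by simp⟩

lemma isFamMulti_sub {n : ℕ} {γ₁ γ₂ : (ℕ → Ω) → (ℕ → A) → A}
    (h₁ : IsFamMulti k n γ₁) (h₂ : IsFamMulti k n γ₂) :
    IsFamMulti k n (fun α a => γ₁ α a - γ₂ α a) := by
  obtain ⟨e₁, a₁, s₁⟩ := h₁
  obtain ⟨e₂, a₂, s₂⟩ := h₂
  refine ⟨fun α α' v v' hα hv => ?_, fun α v t ht x y => ?_, fun α v t ht c x => ?_⟩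
  · show γ₁ α v - γ₂ α v = γ₁ α' v' - γ₂ α' v'
    rw [e₁ α α' v v' hα hv, e₂ α α' v v' hα hv]
  · show γ₁ α _ - γ₂ α _ = (γ₁ α _ - γ₂ α _) + (γ₁ α _ - γ₂ α _)
    rw [a₁ α v t ht x y, a₂ α v t ht x y]; abel
  · show γ₁ α _ - γ₂ α _ = c • (γ₁ α _ - γ₂ α _)
    rw [s₁ α v t ht c x, s₂ α v t ht c x, smul_sub]

lemma isFamMulti_neg {n : ℕ} {γ : (ℕ → Ω) → (ℕ → A) → A} (h : IsFamMulti k n γ) :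
    IsFamMulti k n (fun α a => -γ α a) := by
  obtain ⟨e, ha, hs⟩ := h
  refine ⟨fun α α' v v' hα hv => ?_, fun α v t ht x y => ?_, fun α v t ht c x => ?_⟩
  · show -γ α v = -γ α' v'
    rw [e α α' v v' hα hv]
  · show -γ α _ = -γ α _ + -γ α _
    rw [ha α v t ht x y]; abel
  · show -γ α _ = c • -γ α _
    rw [hs α v t ht c x, smul_neg]

lemma hRmap_isFamMulti {n : ℕ} {f : (ℕ → A) → A} (hf : IsSeqMulti k n f) :
    IsFamMulti k n (hRmap R n f) := by
  obtain ⟨he, hadd, hsmul⟩ := hf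
  refine ⟨fun α α' v v' hα hv => ?_, fun α v t ht x y => ?_, fun α v t ht c x => ?_⟩
  · simp only [hRmap]
    congr 2
    · exact he _ _ fun t ht => by rw [hα t ht, hv t ht]
    · rcases Nat.eq_zero_or_pos n with rfl | hn
      · simp
      refine Finset.sum_congr rfl fun r hr => ?_
      rw [Finset.mem_range] at hr
      have hP : prodSeg α 0 (n - 1) = prodSeg α' 0 (n - 1) :=
        prodSeg_congr _ _ _ _ fun t h1 h2 => hα t (by omega)
      rw [hP, hv r hr]
      congr 1
      refine he _ _ fun t htn => ?_
      rcases eq_or_ne t r with rfl | htr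
      · rw [Function.update_self, Function.update_self]
      · rw [Function.update_of_ne htr, Function.update_of_ne htr, hα t htn, hv t htn]
  · simp only [hRmap, R_comp_update, map_add]
    rw [← smul_add]
    congr 1
    have key : ∀ z : A, z = x ∨ z = y ∨ z = x + y →
        Function.update (fun s => R (α s) (Function.update v t z s)) t z
          = Function.update (fun s => R (α s) (v s)) t z := by
      intro z _
      rw [R_comp_update, Function.update_idem]
    have e1 : f (Function.update (fun s => R (α s) (v s)) t (R (α t) x + R (α t) y))
        = f (Function.update (fun s => R (α s) (v s)) t (R (α t) x))
          + f (Function.update (fun s => R (α s) (v s)) t (R (α t) y)) :=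
      hadd _ t ht _ _
    rw [e1]
    have e2 : ∀ r, r ∈ Finset.range n →
        R (prodSeg α 0 (n - 1))
            (f (Function.update (Function.update (fun s => R (α s) (v s)) t
              (R (α t) x + R (α t) y)) r (Function.update v t (x + y) r)))
          = R (prodSeg α 0 (n - 1))
              (f (Function.update (Function.update (fun s => R (α s) (v s)) t
                (R (α t) x)) r (Function.update v t x r)))
            + R (prodSeg α 0 (n - 1))
              (f (Function.update (Function.update (fun s => R (α s) (v s)) t
                (R (α t) y)) r (Function.update v t y r))) := by
      intro r hr
      rw [Finset.mem_range] at hr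
      rcases eq_or_ne r t with rfl | hrt
      · rw [Function.update_idem, Function.update_idem, Function.update_idem,
          Function.update_self, Function.update_self, Function.update_self, hadd _ r hr x y,
          map_add]
      · rw [Function.update_of_ne hrt, Function.update_of_ne hrt, Function.update_of_ne hrt,
          Function.update_comm hrt.symm, Function.update_comm hrt.symm,
          Function.update_comm hrt.symm,
          hadd (Function.update (fun s => R (α s) (v s)) r (v r)) t ht (R (α t) x) (R (α t) y),
          map_add]
    rw [Finset.sum_congr rfl e2, Finset.sum_add_distrib]
    abel
  · simp only [hRmap, R_comp_update, map_smul]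
    rw [smul_comm]
    congr 1
    have e1 : f (Function.update (fun s => R (α s) (v s)) t (c • R (α t) x))
        = c • f (Function.update (fun s => R (α s) (v s)) t (R (α t) x)) :=
      hsmul _ t ht c _
    rw [e1]
    have e2 : ∀ r, r ∈ Finset.range n →
        R (prodSeg α 0 (n - 1))
            (f (Function.update (Function.update (fun s => R (α s) (v s)) t
              (c • R (α t) x)) r (Function.update v t (c • x) r)))
          = c • R (prodSeg α 0 (n - 1))
              (f (Function.update (Function.update (fun s => R (α s) (v s)) t
                (R (α t) x)) r (Function.update v t x r))) := by
      intro r hr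
      rw [Finset.mem_range] at hr
      rcases eq_or_ne r t with rfl | hrt
      · rw [Function.update_idem, Function.update_idem, Function.update_self,
          Function.update_self, hsmul _ r hr c x, map_smul]
      · rw [Function.update_of_ne hrt, Function.update_of_ne hrt,
          Function.update_comm hrt.symm, Function.update_comm hrt.symm,
          hsmul (Function.update (fun s => R (α s) (v s)) r (v r)) t ht c (R (α t) x),
          map_smul]
    rw [Finset.sum_congr rfl e2, ← Finset.smul_sum, smul_sub]

end Aux2

section KeyId

open Finset Function

lemma sum_peel_bot {M : Type*} [AddCommMonoid M] (F : ℕ → M) (s : ℕ) :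
    ∑ r ∈ Finset.range (s + 2), F r = (∑ r ∈ Finset.range (s + 1), F (r + 1)) + F 0 :=
  Finset.sum_range_succ' F (s + 1)

lemma sum_peel_top {M : Type*} [AddCommMonoid M] (F : ℕ → M) (s : ℕ) :
    ∑ r ∈ Finset.range (s + 2), F r = (∑ r ∈ Finset.range (s + 1), F r) + F (s + 1) :=
  Finset.sum_range_succ F (s + 1)

lemma sum_split_s1 {M : Type*} [AddCommMonoid M] (F : ℕ → M) {i s : ℕ} (h : i < s + 1) :
    ∑ r ∈ Finset.range (s + 1), F r
      = ((∑ r ∈ Finset.range i, F r) + F i) + ∑ r ∈ Finset.Ico (i + 1) (s + 1), F r := by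
  rw [← Finset.sum_range_add_sum_Ico F (show i + 1 ≤ s + 1 by omega)]
  congr 1
  exact Finset.sum_range_succ F i

lemma sum_split_s2 {M : Type*} [AddCommMonoid M] (F : ℕ → M) {i s : ℕ} (h : i < s + 1) :
    ∑ r ∈ Finset.range (s + 2), F r
      = (((∑ r ∈ Finset.range i, F r) + F i) + F (i + 1)) + ∑ r ∈ Finset.Ico (i + 2) (s + 2), F r := by
  rw [← Finset.sum_range_add_sum_Ico F (show i + 2 ≤ s + 2 by omega)]
  congr 1
  rw [show i + 2 = i + 1 + 1 from rfl, Finset.sum_range_succ, Finset.sum_range_succ]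

lemma sum_Ico_shift2 {M : Type*} [AddCommMonoid M] (H : ℕ → M) (p q : ℕ) :
    ∑ r ∈ Finset.Ico (p + 2) (q + 2), H r = ∑ r ∈ Finset.Ico (p + 1) (q + 1), H (r + 1) := by
  rw [Finset.sum_Ico_eq_sum_range, Finset.sum_Ico_eq_sum_range,
    show q + 2 - (p + 2) = q + 1 - (p + 1) by omega]
  exact Finset.sum_congr rfl fun j _ => by congr 1; omega

set_option maxHeartbeats 4000000 in
lemma key_id (R : Ω → A →ₗ[k] A)
    (hRB : ∀ (ω τ : Ω) (x y : A), R ω x * R τ y = R (ω * τ) (R ω x * y + x * R τ y))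
    (s : ℕ) (g : (ℕ → A) → A)
    (hge : ∀ v v' : ℕ → A, (∀ t, t < s + 1 → v t = v' t) → g v = g v')
    (hga : ∀ (v : ℕ → A) (t : ℕ), t < s + 1 → ∀ x y : A,
      g (Function.update v t (x + y)) = g (Function.update v t x) + g (Function.update v t y))
    (α : ℕ → Ω) (a : ℕ → A) :
    dRfam R (s + 1) (hRmap R (s + 1) g) α a + hRmap R (s + 2) (hochD (s + 1) g) α a = 0 := by
  -- sign bookkeeping
  have hs1 : ∀ i : ℕ, ((-1 : ℤ) ^ (i + 1)) * ((-1 : ℤ) ^ (s + 1)) = (-1 : ℤ) ^ (i + s) := by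
    intro i
    rw [← pow_add, show i + 1 + (s + 1) = i + s + 1 + 1 by omega, pow_succ, pow_succ,
      mul_neg_one, mul_neg_one, neg_neg]
  have hs2 : ((-1 : ℤ) ^ (s + 1 + 1)) * ((-1 : ℤ) ^ (s + 1)) = -1 := by
    rw [← pow_add, show s + 1 + 1 + (s + 1) = 2 * (s + 1) + 1 by omega, pow_succ, pow_mul]
    norm_num
  have hs3 : ∀ i : ℕ, ((-1 : ℤ) ^ (s + 2)) * ((-1 : ℤ) ^ (i + 1)) = -((-1 : ℤ) ^ (i + s)) := by
    intro i
    rw [← pow_add, show s + 2 + (i + 1) = i + s + 1 + 1 + 1 by omega, pow_succ, pow_succ,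
      pow_succ, mul_neg_one, mul_neg_one, mul_neg_one, neg_neg]
  have hs4 : ((-1 : ℤ) ^ (s + 2)) * ((-1 : ℤ) ^ (s + 1 + 1)) = 1 := by
    rw [← pow_add, show s + 2 + (s + 1 + 1) = 2 * (s + 2) by omega, pow_mul]
    norm_num
  have hs5 : ∀ x : A, ((-1 : ℤ) ^ (s + 2)) • x = -(((-1 : ℤ) ^ (s + 1)) • x) := by
    intro x
    rw [show s + 2 = s + 1 + 1 from rfl, pow_succ, mul_smul, neg_one_zsmul, smul_neg]
  have hs1' : ∀ i : ℕ, ((-1 : ℤ) ^ (s + 1)) * ((-1 : ℤ) ^ (i + 1)) = (-1 : ℤ) ^ (i + s) := by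
    intro i
    rw [← pow_add, show s + 1 + (i + 1) = i + s + 1 + 1 by omega, pow_succ, pow_succ,
      mul_neg_one, mul_neg_one, neg_neg]
  have hs6 : ((-1 : ℤ) ^ (s + 1)) * ((-1 : ℤ) ^ (s + 1)) = 1 := by
    rw [← pow_add, show s + 1 + (s + 1) = 2 * (s + 1) by omega, pow_mul]
    norm_num
  have hneg1 : ((-1 : ℤ) ^ (s + 2)) = -((-1 : ℤ) ^ (s + 1)) := by
    rw [show s + 2 = s + 1 + 1 from rfl, pow_succ, mul_neg_one]
  have hneg2 : ((-1 : ℤ) ^ (s + 1 + 1)) = -((-1 : ℤ) ^ (s + 1)) := by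
    rw [pow_succ, mul_neg_one]
  have hQ1 : ∀ x : A, R (α 0) (a 0) * R (prodSeg α 1 s) x
      = R (prodSeg α 0 (s + 1)) (R (α 0) (a 0) * x) + R (prodSeg α 0 (s + 1)) (a 0 * R (prodSeg α 1 s) x) := by
    intro x
    rw [hRB (α 0) (prodSeg α 1 s) (a 0) x, show α 0 * (prodSeg α 1 s) = (prodSeg α 0 (s + 1)) from rfl, map_add]
  have hQ2 : (prodSeg α 0 s) * α (s + 1) = (prodSeg α 0 (s + 1)) := by
    rw [prodSeg_succ_right α s 0]
    norm_num
  have hQ3 : ∀ x : A, R (prodSeg α 0 s) x * (R (α (s + 1)) (a (s + 1)))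
      = R (prodSeg α 0 (s + 1)) (R (prodSeg α 0 s) x * (a (s + 1))) + R (prodSeg α 0 (s + 1)) (x * (R (α (s + 1)) (a (s + 1)))) := by
    intro x
    rw [hRB (prodSeg α 0 s) (α (s + 1)) x (a (s + 1)), hQ2, map_add]
  -- expansion of `hRmap g` at the shifted entries
  have e_shift : hRmap R (s + 1) g (fun t => α (1 + t)) (fun t => a (1 + t))
      = ((-1 : ℤ) ^ (s + 1)) • (g (fun t => R (α (1 + t)) (a (1 + t))) - ∑ r ∈ Finset.range (s + 1), R (prodSeg α 1 s) (g (Function.update (fun t => R (α (1 + t)) (a (1 + t))) r (a (1 + r))))) := by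
    simp only [hRmap, show s + 1 - 1 = s from rfl]
    rw [prodSeg_shift1]
  -- expansion of `hRmap g` at the original entries
  have e_self : hRmap R (s + 1) g α a
      = ((-1 : ℤ) ^ (s + 1)) • (g (fun t => R (α t) (a t)) - ∑ r ∈ Finset.range (s + 1), R (prodSeg α 0 s) (g (Function.update (fun t => R (α t) (a t)) r (a r)))) := by
    simp only [hRmap, show s + 1 - 1 = s from rfl]
  -- expansion of `hRmap g` at the collapsed entries
  have e_col : ∀ i ∈ Finset.range (s + 1),
      ((-1 : ℤ) ^ (i + 1)) • hRmap R (s + 1) g (collapseAt α i 2 (α i * α (i + 1)))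
          (collapseAt a i 2 (R (α i) (a i) * a (i + 1) + a i * R (α (i + 1)) (a (i + 1))))
        = ((-1 : ℤ) ^ (i + s)) • g (collapseAt (fun t => R (α t) (a t)) i 2 (R (α i) (a i) * R (α (i + 1)) (a (i + 1))))
          - (∑ r ∈ Finset.range i, ((-1 : ℤ) ^ (i + s)) • R (prodSeg α 0 (s + 1)) (g (Function.update (collapseAt (fun t => R (α t) (a t)) i 2 (R (α i) (a i) * R (α (i + 1)) (a (i + 1)))) r (a r))))
          - ((-1 : ℤ) ^ (i + s)) • R (prodSeg α 0 (s + 1)) (g (collapseAt (fun t => R (α t) (a t)) i 2 (R (α i) (a i) * a (i + 1))))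
          - ((-1 : ℤ) ^ (i + s)) • R (prodSeg α 0 (s + 1)) (g (collapseAt (fun t => R (α t) (a t)) i 2 (a i * R (α (i + 1)) (a (i + 1)))))
          - (∑ r ∈ Finset.Ico (i + 1) (s + 1),
              ((-1 : ℤ) ^ (i + s)) • R (prodSeg α 0 (s + 1)) (g (Function.update (collapseAt (fun t => R (α t) (a t)) i 2 (R (α i) (a i) * R (α (i + 1)) (a (i + 1)))) r (a (r + 1))))) := by
    intro i hi
    rw [Finset.mem_range] at hi
    simp only [hRmap, show s + 1 - 1 = s from rfl]
    rw [R_comp_collapseAt (R := R) α a i (α i * α (i + 1)) (R (α i) (a i) * a (i + 1) + a i * R (α (i + 1)) (a (i + 1))),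
      ← hRB (α i) (α (i + 1)) (a i) (a (i + 1)),
      prodSeg_collapse α i s (by omega)]
    rw [sum_split_s1 _ hi]
    have h2 : (∑ r ∈ Finset.range i,
          R (prodSeg α 0 (s + 1)) (g (Function.update (collapseAt (fun t => R (α t) (a t)) i 2 (R (α i) (a i) * R (α (i + 1)) (a (i + 1)))) r (collapseAt a i 2 (R (α i) (a i) * a (i + 1) + a i * R (α (i + 1)) (a (i + 1))) r))))
        = ∑ r ∈ Finset.range i, R (prodSeg α 0 (s + 1)) (g (Function.update (collapseAt (fun t => R (α t) (a t)) i 2 (R (α i) (a i) * R (α (i + 1)) (a (i + 1)))) r (a r))) :=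
      Finset.sum_congr rfl fun r hr => by
        rw [collapseAt_lt a i (R (α i) (a i) * a (i + 1) + a i * R (α (i + 1)) (a (i + 1))) (Finset.mem_range.mp hr)]
    have h3 : R (prodSeg α 0 (s + 1)) (g (Function.update (collapseAt (fun t => R (α t) (a t)) i 2 (R (α i) (a i) * R (α (i + 1)) (a (i + 1)))) i (collapseAt a i 2 (R (α i) (a i) * a (i + 1) + a i * R (α (i + 1)) (a (i + 1))) i)))
        = R (prodSeg α 0 (s + 1)) (g (collapseAt (fun t => R (α t) (a t)) i 2 (R (α i) (a i) * a (i + 1)))) + R (prodSeg α 0 (s + 1)) (g (collapseAt (fun t => R (α t) (a t)) i 2 (a i * R (α (i + 1)) (a (i + 1))))) := by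
      rw [collapseAt_self,
        hga (collapseAt (fun t => R (α t) (a t)) i 2 (R (α i) (a i) * R (α (i + 1)) (a (i + 1)))) i (by omega) (R (α i) (a i) * a (i + 1)) (a i * R (α (i + 1)) (a (i + 1))),
        update_collapseAt, update_collapseAt, map_add]
    have h4 : (∑ r ∈ Finset.Ico (i + 1) (s + 1),
          R (prodSeg α 0 (s + 1)) (g (Function.update (collapseAt (fun t => R (α t) (a t)) i 2 (R (α i) (a i) * R (α (i + 1)) (a (i + 1)))) r (collapseAt a i 2 (R (α i) (a i) * a (i + 1) + a i * R (α (i + 1)) (a (i + 1))) r))))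
        = ∑ r ∈ Finset.Ico (i + 1) (s + 1),
            R (prodSeg α 0 (s + 1)) (g (Function.update (collapseAt (fun t => R (α t) (a t)) i 2 (R (α i) (a i) * R (α (i + 1)) (a (i + 1)))) r (a (r + 1)))) :=
      Finset.sum_congr rfl fun r hr => by
        rw [collapseAt_gt a i (R (α i) (a i) * a (i + 1) + a i * R (α (i + 1)) (a (i + 1))) (show i < r by
          have := (Finset.mem_Ico.mp hr).1; omega)]
    rw [h2, h3, h4, smul_smul, hs1 i]
    simp only [smul_sub, smul_add, Finset.smul_sum]
    abel
  -- the five terms of `dRfam`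
  have T1 : R (α 0) (a 0) * hRmap R (s + 1) g (fun t => α (1 + t)) (fun t => a (1 + t))
      = ((-1 : ℤ) ^ (s + 1)) • (R (α 0) (a 0) * g (fun t => R (α (1 + t)) (a (1 + t))))
        - (∑ r ∈ Finset.range (s + 1), ((-1 : ℤ) ^ (s + 1)) • R (prodSeg α 0 (s + 1)) (R (α 0) (a 0) * (g (Function.update (fun t => R (α (1 + t)) (a (1 + t))) r (a (1 + r))))))
        - (∑ r ∈ Finset.range (s + 1), ((-1 : ℤ) ^ (s + 1)) • R (prodSeg α 0 (s + 1)) (a 0 * R (prodSeg α 1 s) (g (Function.update (fun t => R (α (1 + t)) (a (1 + t))) r (a (1 + r)))))) := by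
    rw [e_shift, mul_smul_comm, mul_sub, Finset.mul_sum]
    rw [Finset.sum_congr rfl fun r (_ : r ∈ Finset.range (s + 1)) => hQ1 (g (Function.update (fun t => R (α (1 + t)) (a (1 + t))) r (a (1 + r)))),
      Finset.sum_add_distrib]
    simp only [smul_sub, smul_add, Finset.smul_sum]
    abel
  have T2 : R (prodSeg α 0 (s + 1)) (a 0 * hRmap R (s + 1) g (fun t => α (1 + t)) (fun t => a (1 + t)))
      = ((-1 : ℤ) ^ (s + 1)) • R (prodSeg α 0 (s + 1)) (a 0 * g (fun t => R (α (1 + t)) (a (1 + t))))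
        - (∑ r ∈ Finset.range (s + 1), ((-1 : ℤ) ^ (s + 1)) • R (prodSeg α 0 (s + 1)) (a 0 * R (prodSeg α 1 s) (g (Function.update (fun t => R (α (1 + t)) (a (1 + t))) r (a (1 + r)))))) := by
    rw [e_shift, mul_smul_comm, mul_sub, Finset.mul_sum, map_zsmul, map_sub, map_sum]
    simp only [smul_sub, Finset.smul_sum]
  have T4 : ((-1 : ℤ) ^ (s + 1 + 1)) • (hRmap R (s + 1) g α a * (R (α (s + 1)) (a (s + 1))))
      = -(g (fun t => R (α t) (a t)) * (R (α (s + 1)) (a (s + 1))))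
        + (∑ r ∈ Finset.range (s + 1), R (prodSeg α 0 (s + 1)) (R (prodSeg α 0 s) (g (Function.update (fun t => R (α t) (a t)) r (a r))) * (a (s + 1))))
        + (∑ r ∈ Finset.range (s + 1), R (prodSeg α 0 (s + 1)) (g (Function.update (fun t => R (α t) (a t)) r (a r)) * (R (α (s + 1)) (a (s + 1))))) := by
    rw [e_self, smul_mul_assoc, sub_mul, Finset.sum_mul]
    rw [Finset.sum_congr rfl fun r (_ : r ∈ Finset.range (s + 1)) => hQ3 (g (Function.update (fun t => R (α t) (a t)) r (a r))),
      Finset.sum_add_distrib, smul_smul, hs2, smul_sub, neg_one_zsmul, neg_one_zsmul]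
    abel
  have T5 : ((-1 : ℤ) ^ (s + 1 + 1)) • R (prodSeg α 0 (s + 1)) (hRmap R (s + 1) g α a * (a (s + 1)))
      = -(R (prodSeg α 0 (s + 1)) (g (fun t => R (α t) (a t)) * (a (s + 1))))
        + (∑ r ∈ Finset.range (s + 1), R (prodSeg α 0 (s + 1)) (R (prodSeg α 0 s) (g (Function.update (fun t => R (α t) (a t)) r (a r))) * (a (s + 1)))) := by
    rw [e_self, smul_mul_assoc, sub_mul, Finset.sum_mul, map_zsmul, map_sub, map_sum]
    rw [smul_smul, hs2, smul_sub, neg_one_zsmul, neg_one_zsmul]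
    abel
  -- first side
  have hL1 : dRfam R (s + 1) (hRmap R (s + 1) g) α a
      = ((-1 : ℤ) ^ (s + 1)) • (R (α 0) (a 0) * g (fun t => R (α (1 + t)) (a (1 + t))))
      - ((-1 : ℤ) ^ (s + 1)) • R (prodSeg α 0 (s + 1)) (a 0 * g (fun t => R (α (1 + t)) (a (1 + t))))
      - (∑ r ∈ Finset.range (s + 1), ((-1 : ℤ) ^ (s + 1)) • R (prodSeg α 0 (s + 1)) (R (α 0) (a 0) * (g (Function.update (fun t => R (α (1 + t)) (a (1 + t))) r (a (1 + r))))))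
      + (∑ i ∈ Finset.range (s + 1), ((-1 : ℤ) ^ (i + s)) • g (collapseAt (fun t => R (α t) (a t)) i 2 (R (α i) (a i) * R (α (i + 1)) (a (i + 1)))))
      - (∑ i ∈ Finset.range (s + 1), ∑ r ∈ Finset.range i,
          ((-1 : ℤ) ^ (i + s)) • R (prodSeg α 0 (s + 1)) (g (Function.update (collapseAt (fun t => R (α t) (a t)) i 2 (R (α i) (a i) * R (α (i + 1)) (a (i + 1)))) r (a r))))
      - (∑ i ∈ Finset.range (s + 1), ((-1 : ℤ) ^ (i + s)) • R (prodSeg α 0 (s + 1)) (g (collapseAt (fun t => R (α t) (a t)) i 2 (R (α i) (a i) * a (i + 1)))))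
      - (∑ i ∈ Finset.range (s + 1), ((-1 : ℤ) ^ (i + s)) • R (prodSeg α 0 (s + 1)) (g (collapseAt (fun t => R (α t) (a t)) i 2 (a i * R (α (i + 1)) (a (i + 1))))))
      - (∑ i ∈ Finset.range (s + 1), ∑ r ∈ Finset.Ico (i + 1) (s + 1),
          ((-1 : ℤ) ^ (i + s)) • R (prodSeg α 0 (s + 1)) (g (Function.update (collapseAt (fun t => R (α t) (a t)) i 2 (R (α i) (a i) * R (α (i + 1)) (a (i + 1)))) r (a (r + 1)))))
      - g (fun t => R (α t) (a t)) * (R (α (s + 1)) (a (s + 1)))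
      + (∑ r ∈ Finset.range (s + 1), R (prodSeg α 0 (s + 1)) (g (Function.update (fun t => R (α t) (a t)) r (a r)) * (R (α (s + 1)) (a (s + 1)))))
      + R (prodSeg α 0 (s + 1)) (g (fun t => R (α t) (a t)) * (a (s + 1))) := by
    simp only [dRfam]
    rw [T1, T2, T4, T5, Finset.sum_congr rfl e_col]
    simp only [Finset.sum_sub_distrib]
    generalize ((-1 : ℤ) ^ (s + 1)) • (R (α 0) (a 0) * g (fun t => R (α (1 + t)) (a (1 + t)))) = x1
    generalize (∑ r ∈ Finset.range (s + 1), ((-1 : ℤ) ^ (s + 1)) • R (prodSeg α 0 (s + 1)) (R (α 0) (a 0) * (g (Function.update (fun t => R (α (1 + t)) (a (1 + t))) r (a (1 + r)))))) = x2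
    generalize (∑ r ∈ Finset.range (s + 1), ((-1 : ℤ) ^ (s + 1)) • R (prodSeg α 0 (s + 1)) (a 0 * R (prodSeg α 1 s) (g (Function.update (fun t => R (α (1 + t)) (a (1 + t))) r (a (1 + r)))))) = x3
    generalize ((-1 : ℤ) ^ (s + 1)) • R (prodSeg α 0 (s + 1)) (a 0 * g (fun t => R (α (1 + t)) (a (1 + t)))) = x4
    generalize (∑ i ∈ Finset.range (s + 1), ((-1 : ℤ) ^ (i + s)) • g (collapseAt (fun t => R (α t) (a t)) i 2 (R (α i) (a i) * R (α (i + 1)) (a (i + 1))))) = x5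
    generalize (∑ i ∈ Finset.range (s + 1), ∑ r ∈ Finset.range i, ((-1 : ℤ) ^ (i + s)) • R (prodSeg α 0 (s + 1)) (g (Function.update (collapseAt (fun t => R (α t) (a t)) i 2 (R (α i) (a i) * R (α (i + 1)) (a (i + 1)))) r (a r)))) = x6
    generalize (∑ i ∈ Finset.range (s + 1), ((-1 : ℤ) ^ (i + s)) • R (prodSeg α 0 (s + 1)) (g (collapseAt (fun t => R (α t) (a t)) i 2 (R (α i) (a i) * a (i + 1))))) = x7
    generalize (∑ i ∈ Finset.range (s + 1), ((-1 : ℤ) ^ (i + s)) • R (prodSeg α 0 (s + 1)) (g (collapseAt (fun t => R (α t) (a t)) i 2 (a i * R (α (i + 1)) (a (i + 1)))))) = x8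
    generalize (∑ i ∈ Finset.range (s + 1), ∑ r ∈ Finset.Ico (i + 1) (s + 1), ((-1 : ℤ) ^ (i + s)) • R (prodSeg α 0 (s + 1)) (g (Function.update (collapseAt (fun t => R (α t) (a t)) i 2 (R (α i) (a i) * R (α (i + 1)) (a (i + 1)))) r (a (r + 1))))) = x9
    generalize (g (fun t => R (α t) (a t)) * R (α (s + 1)) (a (s + 1))) = x10
    generalize (∑ r ∈ Finset.range (s + 1), R (prodSeg α 0 (s + 1)) (R (prodSeg α 0 s) (g (Function.update (fun t => R (α t) (a t)) r (a r))) * a (s + 1))) = x11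
    generalize (∑ r ∈ Finset.range (s + 1), R (prodSeg α 0 (s + 1)) (g (Function.update (fun t => R (α t) (a t)) r (a r)) * R (α (s + 1)) (a (s + 1)))) = x12
    generalize R (prodSeg α 0 (s + 1)) (g (fun t => R (α t) (a t)) * a (s + 1)) = x13
    abel
  -- second side pieces
  have hP1 : (∑ r ∈ Finset.range (s + 2),
        R (prodSeg α 0 (s + 1)) (Function.update (fun t => R (α t) (a t)) r (a r) 0
          * g (fun t => Function.update (fun t => R (α t) (a t)) r (a r) (1 + t))))
      = (∑ r ∈ Finset.range (s + 1), R (prodSeg α 0 (s + 1)) (R (α 0) (a 0) * (g (Function.update (fun t => R (α (1 + t)) (a (1 + t))) r (a (1 + r))))))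
        + R (prodSeg α 0 (s + 1)) (a 0 * g (fun t => R (α (1 + t)) (a (1 + t)))) := by
    rw [sum_peel_bot]
    congr 1
    · refine Finset.sum_congr rfl fun r _ => ?_
      have h1 : Function.update (fun t => R (α t) (a t)) (r + 1) (a (r + 1)) 0 = R (α 0) (a 0) := by
        rw [Function.update_of_ne (show (0 : ℕ) ≠ r + 1 by omega)]
      have h2 : (fun t => Function.update (fun t => R (α t) (a t)) (r + 1) (a (r + 1)) (1 + t))
          = Function.update (fun t => R (α (1 + t)) (a (1 + t))) r (a (1 + r)) := by
        funext t
        simp only [Function.update_apply]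
        split_ifs <;> first | rfl | omega | (congr 1; omega)
      rw [h1, h2]
    · have h1 : Function.update (fun t => R (α t) (a t)) 0 (a 0) 0 = a 0 := Function.update_self 0 (a 0) (fun t => R (α t) (a t))
      have h2 : (fun t => Function.update (fun t => R (α t) (a t)) 0 (a 0) (1 + t)) = (fun t => R (α (1 + t)) (a (1 + t))) := by
        funext t
        rw [Function.update_of_ne (show 1 + t ≠ 0 by omega)]
      rw [h1, h2]
  have hP2 : (∑ r ∈ Finset.range (s + 2), ∑ i ∈ Finset.range (s + 1),
        ((-1 : ℤ) ^ (i + 1)) • R (prodSeg α 0 (s + 1)) (g (collapseAt (Function.update (fun t => R (α t) (a t)) r (a r)) i 2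
          (Function.update (fun t => R (α t) (a t)) r (a r) i * Function.update (fun t => R (α t) (a t)) r (a r) (i + 1)))))
      = ∑ i ∈ Finset.range (s + 1), ((-1 : ℤ) ^ (i + 1)) •
          ((((∑ r ∈ Finset.range i, R (prodSeg α 0 (s + 1)) (g (Function.update (collapseAt (fun t => R (α t) (a t)) i 2 (R (α i) (a i) * R (α (i + 1)) (a (i + 1)))) r (a r))))
            + R (prodSeg α 0 (s + 1)) (g (collapseAt (fun t => R (α t) (a t)) i 2 (a i * R (α (i + 1)) (a (i + 1))))))
            + R (prodSeg α 0 (s + 1)) (g (collapseAt (fun t => R (α t) (a t)) i 2 (R (α i) (a i) * a (i + 1)))))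
            + ∑ r ∈ Finset.Ico (i + 1) (s + 1),
                R (prodSeg α 0 (s + 1)) (g (Function.update (collapseAt (fun t => R (α t) (a t)) i 2 (R (α i) (a i) * R (α (i + 1)) (a (i + 1)))) r (a (r + 1))))) := by
    rw [Finset.sum_comm]
    refine Finset.sum_congr rfl fun i hi => ?_
    rw [Finset.mem_range] at hi
    rw [← Finset.smul_sum]
    congr 1
    rw [sum_split_s2 _ hi]
    congr 1
    congr 1
    congr 1
    · refine Finset.sum_congr rfl fun r hr => ?_
      have hr' : r < i := Finset.mem_range.mp hr
      have h1 : collapseAt (Function.update (fun t => R (α t) (a t)) r (a r)) i 2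
            (Function.update (fun t => R (α t) (a t)) r (a r) i * Function.update (fun t => R (α t) (a t)) r (a r) (i + 1))
          = Function.update (collapseAt (fun t => R (α t) (a t)) i 2 (R (α i) (a i) * R (α (i + 1)) (a (i + 1)))) r (a r) := by
        funext t
        simp only [collapseAt, Function.update_apply]
        split_ifs <;> first | rfl | omega | (congr 1; omega) | (congr 1 <;> (congr 1; omega))
      rw [h1]
    · have h1 : collapseAt (Function.update (fun t => R (α t) (a t)) i (a i)) i 2
            (Function.update (fun t => R (α t) (a t)) i (a i) i * Function.update (fun t => R (α t) (a t)) i (a i) (i + 1))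
          = (collapseAt (fun t => R (α t) (a t)) i 2 (a i * R (α (i + 1)) (a (i + 1)))) := by
        funext t
        simp only [collapseAt, Function.update_apply]
        split_ifs <;> first | rfl | omega | (congr 1; omega) | (congr 1 <;> (congr 1; omega))
      rw [h1]
    · have h1 : collapseAt (Function.update (fun t => R (α t) (a t)) (i + 1) (a (i + 1))) i 2
            (Function.update (fun t => R (α t) (a t)) (i + 1) (a (i + 1)) i
              * Function.update (fun t => R (α t) (a t)) (i + 1) (a (i + 1)) (i + 1))
          = (collapseAt (fun t => R (α t) (a t)) i 2 (R (α i) (a i) * a (i + 1))) := by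
        funext t
        simp only [collapseAt, Function.update_apply]
        split_ifs <;> first | rfl | omega | (congr 1; omega) | (congr 1 <;> (congr 1; omega))
      rw [h1]
    · have h2 : ∀ r ∈ Finset.Ico (i + 2) (s + 2),
          R (prodSeg α 0 (s + 1)) (g (collapseAt (Function.update (fun t => R (α t) (a t)) r (a r)) i 2
            (Function.update (fun t => R (α t) (a t)) r (a r) i * Function.update (fun t => R (α t) (a t)) r (a r) (i + 1))))
            = R (prodSeg α 0 (s + 1)) (g (Function.update (collapseAt (fun t => R (α t) (a t)) i 2 (R (α i) (a i) * R (α (i + 1)) (a (i + 1)))) (r - 1) (a r))) := by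
        intro r hr
        have hr' : i + 2 ≤ r := (Finset.mem_Ico.mp hr).1
        have h1 : collapseAt (Function.update (fun t => R (α t) (a t)) r (a r)) i 2
              (Function.update (fun t => R (α t) (a t)) r (a r) i * Function.update (fun t => R (α t) (a t)) r (a r) (i + 1))
            = Function.update (collapseAt (fun t => R (α t) (a t)) i 2 (R (α i) (a i) * R (α (i + 1)) (a (i + 1)))) (r - 1) (a r) := by
          funext t
          simp only [collapseAt, Function.update_apply]
          split_ifs <;> first | rfl | omega | (congr 1; omega) | (congr 1 <;> (congr 1; omega))
        rw [h1]
      rw [Finset.sum_congr rfl h2, sum_Ico_shift2]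
      simp only [Nat.add_sub_cancel]
  have hP3 : (∑ r ∈ Finset.range (s + 2), ((-1 : ℤ) ^ (s + 1 + 1)) •
        R (prodSeg α 0 (s + 1)) (g (Function.update (fun t => R (α t) (a t)) r (a r)) * Function.update (fun t => R (α t) (a t)) r (a r) (s + 1)))
      = (∑ r ∈ Finset.range (s + 1), ((-1 : ℤ) ^ (s + 1 + 1)) •
          R (prodSeg α 0 (s + 1)) (g (Function.update (fun t => R (α t) (a t)) r (a r)) * (R (α (s + 1)) (a (s + 1)))))
        + ((-1 : ℤ) ^ (s + 1 + 1)) • R (prodSeg α 0 (s + 1)) (g (fun t => R (α t) (a t)) * (a (s + 1))) := by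
    rw [sum_peel_top]
    congr 1
    · refine Finset.sum_congr rfl fun r hr => ?_
      have hr' : r < s + 1 := Finset.mem_range.mp hr
      rw [Function.update_of_ne (show s + 1 ≠ r by omega)]
    · have h1 : g (Function.update (fun t => R (α t) (a t)) (s + 1) (a (s + 1))) = g (fun t => R (α t) (a t)) :=
        hge _ _ fun t ht => Function.update_of_ne (by omega) _ _
      rw [Function.update_self, h1]
  -- second side
  have hL2 : hRmap R (s + 2) (hochD (s + 1) g) α a = -(((-1 : ℤ) ^ (s + 1)) • (R (α 0) (a 0) * g (fun t => R (α (1 + t)) (a (1 + t))))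
      - ((-1 : ℤ) ^ (s + 1)) • R (prodSeg α 0 (s + 1)) (a 0 * g (fun t => R (α (1 + t)) (a (1 + t))))
      - (∑ r ∈ Finset.range (s + 1), ((-1 : ℤ) ^ (s + 1)) • R (prodSeg α 0 (s + 1)) (R (α 0) (a 0) * (g (Function.update (fun t => R (α (1 + t)) (a (1 + t))) r (a (1 + r))))))
      + (∑ i ∈ Finset.range (s + 1), ((-1 : ℤ) ^ (i + s)) • g (collapseAt (fun t => R (α t) (a t)) i 2 (R (α i) (a i) * R (α (i + 1)) (a (i + 1)))))
      - (∑ i ∈ Finset.range (s + 1), ∑ r ∈ Finset.range i,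
          ((-1 : ℤ) ^ (i + s)) • R (prodSeg α 0 (s + 1)) (g (Function.update (collapseAt (fun t => R (α t) (a t)) i 2 (R (α i) (a i) * R (α (i + 1)) (a (i + 1)))) r (a r))))
      - (∑ i ∈ Finset.range (s + 1), ((-1 : ℤ) ^ (i + s)) • R (prodSeg α 0 (s + 1)) (g (collapseAt (fun t => R (α t) (a t)) i 2 (R (α i) (a i) * a (i + 1)))))
      - (∑ i ∈ Finset.range (s + 1), ((-1 : ℤ) ^ (i + s)) • R (prodSeg α 0 (s + 1)) (g (collapseAt (fun t => R (α t) (a t)) i 2 (a i * R (α (i + 1)) (a (i + 1))))))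
      - (∑ i ∈ Finset.range (s + 1), ∑ r ∈ Finset.Ico (i + 1) (s + 1),
          ((-1 : ℤ) ^ (i + s)) • R (prodSeg α 0 (s + 1)) (g (Function.update (collapseAt (fun t => R (α t) (a t)) i 2 (R (α i) (a i) * R (α (i + 1)) (a (i + 1)))) r (a (r + 1)))))
      - g (fun t => R (α t) (a t)) * (R (α (s + 1)) (a (s + 1)))
      + (∑ r ∈ Finset.range (s + 1), R (prodSeg α 0 (s + 1)) (g (Function.update (fun t => R (α t) (a t)) r (a r)) * (R (α (s + 1)) (a (s + 1)))))
      + R (prodSeg α 0 (s + 1)) (g (fun t => R (α t) (a t)) * (a (s + 1)))) := by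
    have hsum : (∑ r ∈ Finset.range (s + 2), R (prodSeg α 0 (s + 1))
        (Function.update (fun t => R (α t) (a t)) r (a r) 0 * g (fun t => Function.update (fun t => R (α t) (a t)) r (a r) (1 + t))
          + (∑ i ∈ Finset.range (s + 1), ((-1 : ℤ) ^ (i + 1)) •
              g (collapseAt (Function.update (fun t => R (α t) (a t)) r (a r)) i 2
                (Function.update (fun t => R (α t) (a t)) r (a r) i * Function.update (fun t => R (α t) (a t)) r (a r) (i + 1))))
          + ((-1 : ℤ) ^ (s + 1 + 1)) •
              (g (Function.update (fun t => R (α t) (a t)) r (a r)) * Function.update (fun t => R (α t) (a t)) r (a r) (s + 1))))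
      = ((∑ r ∈ Finset.range (s + 1), R (prodSeg α 0 (s + 1)) (R (α 0) (a 0) * (g (Function.update (fun t => R (α (1 + t)) (a (1 + t))) r (a (1 + r))))))
        + R (prodSeg α 0 (s + 1)) (a 0 * g (fun t => R (α (1 + t)) (a (1 + t)))))
        + (∑ i ∈ Finset.range (s + 1), ((-1 : ℤ) ^ (i + 1)) •
          ((((∑ r ∈ Finset.range i, R (prodSeg α 0 (s + 1)) (g (Function.update (collapseAt (fun t => R (α t) (a t)) i 2 (R (α i) (a i) * R (α (i + 1)) (a (i + 1)))) r (a r))))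
            + R (prodSeg α 0 (s + 1)) (g (collapseAt (fun t => R (α t) (a t)) i 2 (a i * R (α (i + 1)) (a (i + 1))))))
            + R (prodSeg α 0 (s + 1)) (g (collapseAt (fun t => R (α t) (a t)) i 2 (R (α i) (a i) * a (i + 1)))))
            + ∑ r ∈ Finset.Ico (i + 1) (s + 1),
                R (prodSeg α 0 (s + 1)) (g (Function.update (collapseAt (fun t => R (α t) (a t)) i 2 (R (α i) (a i) * R (α (i + 1)) (a (i + 1)))) r (a (r + 1))))))
        + ((∑ r ∈ Finset.range (s + 1), ((-1 : ℤ) ^ (s + 1 + 1)) •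
            R (prodSeg α 0 (s + 1)) (g (Function.update (fun t => R (α t) (a t)) r (a r)) * (R (α (s + 1)) (a (s + 1)))))
          + ((-1 : ℤ) ^ (s + 1 + 1)) • R (prodSeg α 0 (s + 1)) (g (fun t => R (α t) (a t)) * (a (s + 1)))) := by
      rw [← hP1, ← hP2, ← hP3, ← Finset.sum_add_distrib, ← Finset.sum_add_distrib]
      refine Finset.sum_congr rfl fun r _ => ?_
      rw [map_add, map_add, map_sum, map_zsmul]
      simp only [map_zsmul]
    have hE0i : ∀ i ∈ Finset.range (s + 1),
        ((-1 : ℤ) ^ (s + 2)) • (((-1 : ℤ) ^ (i + 1)) • g (collapseAt (fun t => R (α t) (a t)) i 2 (R (α i) (a i) * R (α (i + 1)) (a (i + 1)))))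
          = -(((-1 : ℤ) ^ (i + s)) • g (collapseAt (fun t => R (α t) (a t)) i 2 (R (α i) (a i) * R (α (i + 1)) (a (i + 1))))) := fun i _ => by
      rw [smul_smul, hs3 i, neg_smul]
    have hE0 : ((-1 : ℤ) ^ (s + 2)) • (R (α 0) (a 0) * g (fun t => R (α (1 + t)) (a (1 + t)))
          + (∑ i ∈ Finset.range (s + 1), ((-1 : ℤ) ^ (i + 1)) • g (collapseAt (fun t => R (α t) (a t)) i 2 (R (α i) (a i) * R (α (i + 1)) (a (i + 1)))))
          + ((-1 : ℤ) ^ (s + 1 + 1)) • (g (fun t => R (α t) (a t)) * (R (α (s + 1)) (a (s + 1)))))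
        = (-(((-1 : ℤ) ^ (s + 1)) • (R (α 0) (a 0) * g (fun t => R (α (1 + t)) (a (1 + t)))))
            + -(∑ i ∈ Finset.range (s + 1), ((-1 : ℤ) ^ (i + s)) • g (collapseAt (fun t => R (α t) (a t)) i 2 (R (α i) (a i) * R (α (i + 1)) (a (i + 1))))))
          + g (fun t => R (α t) (a t)) * (R (α (s + 1)) (a (s + 1))) := by
      rw [smul_add, smul_add, hs5 (R (α 0) (a 0) * g (fun t => R (α (1 + t)) (a (1 + t)))), Finset.smul_sum,
        Finset.sum_congr rfl hE0i, Finset.sum_neg_distrib, smul_smul, hs4, one_smul]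
    have hB1 : ((-1 : ℤ) ^ (s + 2)) • (∑ r ∈ Finset.range (s + 1), R (prodSeg α 0 (s + 1)) (R (α 0) (a 0) * (g (Function.update (fun t => R (α (1 + t)) (a (1 + t))) r (a (1 + r))))))
        = -(∑ r ∈ Finset.range (s + 1), ((-1 : ℤ) ^ (s + 1)) • R (prodSeg α 0 (s + 1)) (R (α 0) (a 0) * (g (Function.update (fun t => R (α (1 + t)) (a (1 + t))) r (a (1 + r)))))) := by
      rw [Finset.smul_sum,
        Finset.sum_congr rfl fun r (_ : r ∈ Finset.range (s + 1)) =>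
          hs5 (R (prodSeg α 0 (s + 1)) (R (α 0) (a 0) * (g (Function.update (fun t => R (α (1 + t)) (a (1 + t))) r (a (1 + r)))))),
        Finset.sum_neg_distrib]
    have hB2 : ((-1 : ℤ) ^ (s + 2)) • R (prodSeg α 0 (s + 1)) (a 0 * g (fun t => R (α (1 + t)) (a (1 + t))))
        = -(((-1 : ℤ) ^ (s + 1)) • R (prodSeg α 0 (s + 1)) (a 0 * g (fun t => R (α (1 + t)) (a (1 + t))))) := hs5 _
    have hB3i : ∀ i ∈ Finset.range (s + 1),
        ((-1 : ℤ) ^ (s + 2)) • (((-1 : ℤ) ^ (i + 1)) •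
          ((((∑ r ∈ Finset.range i, R (prodSeg α 0 (s + 1)) (g (Function.update (collapseAt (fun t => R (α t) (a t)) i 2 (R (α i) (a i) * R (α (i + 1)) (a (i + 1)))) r (a r))))
            + R (prodSeg α 0 (s + 1)) (g (collapseAt (fun t => R (α t) (a t)) i 2 (a i * R (α (i + 1)) (a (i + 1))))))
            + R (prodSeg α 0 (s + 1)) (g (collapseAt (fun t => R (α t) (a t)) i 2 (R (α i) (a i) * a (i + 1)))))
            + ∑ r ∈ Finset.Ico (i + 1) (s + 1), R (prodSeg α 0 (s + 1)) (g (Function.update (collapseAt (fun t => R (α t) (a t)) i 2 (R (α i) (a i) * R (α (i + 1)) (a (i + 1)))) r (a (r + 1))))))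
          = -(((((∑ r ∈ Finset.range i, ((-1 : ℤ) ^ (i + s)) • R (prodSeg α 0 (s + 1)) (g (Function.update (collapseAt (fun t => R (α t) (a t)) i 2 (R (α i) (a i) * R (α (i + 1)) (a (i + 1)))) r (a r))))
              + ((-1 : ℤ) ^ (i + s)) • R (prodSeg α 0 (s + 1)) (g (collapseAt (fun t => R (α t) (a t)) i 2 (a i * R (α (i + 1)) (a (i + 1))))))
              + ((-1 : ℤ) ^ (i + s)) • R (prodSeg α 0 (s + 1)) (g (collapseAt (fun t => R (α t) (a t)) i 2 (R (α i) (a i) * a (i + 1)))))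
              + ∑ r ∈ Finset.Ico (i + 1) (s + 1),
                  ((-1 : ℤ) ^ (i + s)) • R (prodSeg α 0 (s + 1)) (g (Function.update (collapseAt (fun t => R (α t) (a t)) i 2 (R (α i) (a i) * R (α (i + 1)) (a (i + 1)))) r (a (r + 1)))))) := fun i _ => by
      rw [smul_smul, hs3 i, neg_smul, smul_add, smul_add, smul_add, Finset.smul_sum,
        Finset.smul_sum]
    have hB3 : ((-1 : ℤ) ^ (s + 2)) • (∑ i ∈ Finset.range (s + 1), ((-1 : ℤ) ^ (i + 1)) •
          ((((∑ r ∈ Finset.range i, R (prodSeg α 0 (s + 1)) (g (Function.update (collapseAt (fun t => R (α t) (a t)) i 2 (R (α i) (a i) * R (α (i + 1)) (a (i + 1)))) r (a r))))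
            + R (prodSeg α 0 (s + 1)) (g (collapseAt (fun t => R (α t) (a t)) i 2 (a i * R (α (i + 1)) (a (i + 1))))))
            + R (prodSeg α 0 (s + 1)) (g (collapseAt (fun t => R (α t) (a t)) i 2 (R (α i) (a i) * a (i + 1)))))
            + ∑ r ∈ Finset.Ico (i + 1) (s + 1), R (prodSeg α 0 (s + 1)) (g (Function.update (collapseAt (fun t => R (α t) (a t)) i 2 (R (α i) (a i) * R (α (i + 1)) (a (i + 1)))) r (a (r + 1))))))
        = -(((((∑ i ∈ Finset.range (s + 1), ∑ r ∈ Finset.range i,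
                ((-1 : ℤ) ^ (i + s)) • R (prodSeg α 0 (s + 1)) (g (Function.update (collapseAt (fun t => R (α t) (a t)) i 2 (R (α i) (a i) * R (α (i + 1)) (a (i + 1)))) r (a r))))
            + ∑ i ∈ Finset.range (s + 1), ((-1 : ℤ) ^ (i + s)) • R (prodSeg α 0 (s + 1)) (g (collapseAt (fun t => R (α t) (a t)) i 2 (a i * R (α (i + 1)) (a (i + 1))))))
            + ∑ i ∈ Finset.range (s + 1), ((-1 : ℤ) ^ (i + s)) • R (prodSeg α 0 (s + 1)) (g (collapseAt (fun t => R (α t) (a t)) i 2 (R (α i) (a i) * a (i + 1)))))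
            + ∑ i ∈ Finset.range (s + 1), ∑ r ∈ Finset.Ico (i + 1) (s + 1),
                ((-1 : ℤ) ^ (i + s)) • R (prodSeg α 0 (s + 1)) (g (Function.update (collapseAt (fun t => R (α t) (a t)) i 2 (R (α i) (a i) * R (α (i + 1)) (a (i + 1)))) r (a (r + 1)))))) := by
      rw [Finset.smul_sum, Finset.sum_congr rfl hB3i, Finset.sum_neg_distrib,
        Finset.sum_add_distrib, Finset.sum_add_distrib, Finset.sum_add_distrib]
    have hB4 : ((-1 : ℤ) ^ (s + 2)) • (∑ r ∈ Finset.range (s + 1), ((-1 : ℤ) ^ (s + 1 + 1)) • R (prodSeg α 0 (s + 1)) (g (Function.update (fun t => R (α t) (a t)) r (a r)) * (R (α (s + 1)) (a (s + 1)))))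
        = ∑ r ∈ Finset.range (s + 1), R (prodSeg α 0 (s + 1)) (g (Function.update (fun t => R (α t) (a t)) r (a r)) * (R (α (s + 1)) (a (s + 1)))) := by
      rw [Finset.smul_sum]
      exact Finset.sum_congr rfl fun r _ => by rw [smul_smul, hs4, one_smul]
    have hB5 : ((-1 : ℤ) ^ (s + 2)) • (((-1 : ℤ) ^ (s + 1 + 1)) • R (prodSeg α 0 (s + 1)) (g (fun t => R (α t) (a t)) * a (s + 1)))
        = R (prodSeg α 0 (s + 1)) (g (fun t => R (α t) (a t)) * a (s + 1)) := by
      rw [smul_smul, hs4, one_smul]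
    simp only [hRmap, hochD, show s + 2 - 1 = s + 1 from rfl]
    rw [hsum, smul_sub, hE0, smul_add, smul_add, smul_add, smul_add, hB1, hB2, hB3, hB4, hB5]
    generalize ((-1 : ℤ) ^ (s + 1)) • (R (α 0) (a 0) * g (fun t => R (α (1 + t)) (a (1 + t)))) = x1
    generalize (∑ r ∈ Finset.range (s + 1), ((-1 : ℤ) ^ (s + 1)) • R (prodSeg α 0 (s + 1)) (R (α 0) (a 0) * (g (Function.update (fun t => R (α (1 + t)) (a (1 + t))) r (a (1 + r)))))) = x2
    generalize (∑ r ∈ Finset.range (s + 1), ((-1 : ℤ) ^ (s + 1)) • R (prodSeg α 0 (s + 1)) (a 0 * R (prodSeg α 1 s) (g (Function.update (fun t => R (α (1 + t)) (a (1 + t))) r (a (1 + r)))))) = x3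
    generalize ((-1 : ℤ) ^ (s + 1)) • R (prodSeg α 0 (s + 1)) (a 0 * g (fun t => R (α (1 + t)) (a (1 + t)))) = x4
    generalize (∑ i ∈ Finset.range (s + 1), ((-1 : ℤ) ^ (i + s)) • g (collapseAt (fun t => R (α t) (a t)) i 2 (R (α i) (a i) * R (α (i + 1)) (a (i + 1))))) = x5
    generalize (∑ i ∈ Finset.range (s + 1), ∑ r ∈ Finset.range i, ((-1 : ℤ) ^ (i + s)) • R (prodSeg α 0 (s + 1)) (g (Function.update (collapseAt (fun t => R (α t) (a t)) i 2 (R (α i) (a i) * R (α (i + 1)) (a (i + 1)))) r (a r)))) = x6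
    generalize (∑ i ∈ Finset.range (s + 1), ((-1 : ℤ) ^ (i + s)) • R (prodSeg α 0 (s + 1)) (g (collapseAt (fun t => R (α t) (a t)) i 2 (R (α i) (a i) * a (i + 1))))) = x7
    generalize (∑ i ∈ Finset.range (s + 1), ((-1 : ℤ) ^ (i + s)) • R (prodSeg α 0 (s + 1)) (g (collapseAt (fun t => R (α t) (a t)) i 2 (a i * R (α (i + 1)) (a (i + 1)))))) = x8
    generalize (∑ i ∈ Finset.range (s + 1), ∑ r ∈ Finset.Ico (i + 1) (s + 1), ((-1 : ℤ) ^ (i + s)) • R (prodSeg α 0 (s + 1)) (g (Function.update (collapseAt (fun t => R (α t) (a t)) i 2 (R (α i) (a i) * R (α (i + 1)) (a (i + 1)))) r (a (r + 1))))) = x9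
    generalize (g (fun t => R (α t) (a t)) * R (α (s + 1)) (a (s + 1))) = x10
    generalize (∑ r ∈ Finset.range (s + 1), R (prodSeg α 0 (s + 1)) (R (prodSeg α 0 s) (g (Function.update (fun t => R (α t) (a t)) r (a r))) * a (s + 1))) = x11
    generalize (∑ r ∈ Finset.range (s + 1), R (prodSeg α 0 (s + 1)) (g (Function.update (fun t => R (α t) (a t)) r (a r)) * R (α (s + 1)) (a (s + 1)))) = x12
    generalize R (prodSeg α 0 (s + 1)) (g (fun t => R (α t) (a t)) * a (s + 1)) = x13
    abel
  rw [hL1, hL2, add_neg_cancel]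

end KeyId

/- STATEMENT 14: for a Rota-Baxter family algebra `(A, {R_α})`, the maps
`i(γ) = (0, γ)` and `p(f, γ) = f` are morphisms of cochain complexes, the
sequence `0 → C_R → C_RBf → C_Hoch → 0` is degreewise short exact, and there
is an induced long exact sequence
`⋯ → H^{n-1}_R → Hⁿ_RBf → Hⁿ_Hoch → Hⁿ_R → ⋯`, the connecting morphism being
induced by `f ↦ h_R f`.  Exactness of the long sequence is stated elementwise
on cocycles.  -/

theorem RotaBaxter_family_long_exact_sequence
    (R : Ω → A →ₗ[k] A)
    -- the Rota-Baxter family identity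
    (hRB : ∀ (α β : Ω) (a b : A),
      R α a * R β b = R (α * β) (R α a * b + a * R β b)) :
    -- `i` is a morphism of cochain complexes
    (∀ n : ℕ, 2 ≤ n → ∀ γ : (ℕ → Ω) → (ℕ → A) → A,
      dRBf R n ((0 : (ℕ → A) → A), γ) = (0, dRfam R (n - 1) γ)) ∧
    -- `p` is a morphism of cochain complexes
    (∀ n : ℕ, 2 ≤ n → ∀ x : ((ℕ → A) → A) × ((ℕ → Ω) → (ℕ → A) → A),
      (dRBf R n x).1 = hochD n x.1) ∧
    -- degreewise short exactness: `i` injective, `ker p = range i`, `p` surjective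
    (∀ γ γ' : (ℕ → Ω) → (ℕ → A) → A,
      (((0 : (ℕ → A) → A), γ) = ((0 : (ℕ → A) → A), γ')) → γ = γ') ∧
    (∀ x : ((ℕ → A) → A) × ((ℕ → Ω) → (ℕ → A) → A),
      x.1 = 0 ↔ ∃ γ, x = ((0 : (ℕ → A) → A), γ)) ∧
    (∀ f : (ℕ → A) → A,
      ∃ x : ((ℕ → A) → A) × ((ℕ → Ω) → (ℕ → A) → A), x.1 = f) ∧
    -- exactness of the long sequence at `Hⁿ_RBf`:  `ker p* = im i*`
    (∀ n : ℕ, 2 ≤ n →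
      ∀ (f : (ℕ → A) → A) (γ : (ℕ → Ω) → (ℕ → A) → A),
        IsSeqMulti k n f → IsFamMulti k (n - 1) γ →
        hochD n f = 0 →
        (fun α a => dRfam R (n - 1) γ α a + hRmap R n f α a)
          = (0 : (ℕ → Ω) → (ℕ → A) → A) →
        (IsCobHoch (k := k) n f ↔
          ∃ γ₀ : (ℕ → Ω) → (ℕ → A) → A, IsFamMulti k (n - 1) γ₀ ∧
            dRfam R (n - 1) γ₀ = 0 ∧
            IsCobRBf R n (f, fun α a => γ α a - γ₀ α a))) ∧
    -- exactness at `Hⁿ_Hoch`:  `im p* = ker ∂`, `∂` induced by `f ↦ h_R f`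
    (∀ n : ℕ, 2 ≤ n →
      ∀ f : (ℕ → A) → A, IsSeqMulti k n f → hochD n f = 0 →
        (IsCobFam R n (hRmap R n f) ↔
          ∃ (f' : (ℕ → A) → A) (γ' : (ℕ → Ω) → (ℕ → A) → A),
            IsSeqMulti k n f' ∧ IsFamMulti k (n - 1) γ' ∧
            hochD n f' = 0 ∧
            (fun α a => dRfam R (n - 1) γ' α a + hRmap R n f' α a)
              = (0 : (ℕ → Ω) → (ℕ → A) → A) ∧
            IsCobHoch (k := k) n (f - f'))) ∧
    -- exactness at `Hⁿ_R`:  `im ∂ = ker i*`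
    (∀ n : ℕ, 1 ≤ n →
      ∀ γ : (ℕ → Ω) → (ℕ → A) → A, IsFamMulti k n γ → dRfam R n γ = 0 →
        (IsCobRBf R (n + 1) ((0 : (ℕ → A) → A), γ) ↔
          ∃ f : (ℕ → A) → A, IsSeqMulti k n f ∧ hochD n f = 0 ∧
            IsCobFam R n (fun α a => γ α a - hRmap R n f α a))) := by
  refine ⟨?_, ?_, ?_, ?_, ?_, ?_, ?_, ?_⟩
  · -- i is a chain map
    intro n hn γ
    simp only [dRBf, hochD_zero, hRmap_zero, Pi.zero_apply, add_zero]
  · intro n hn x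
    rfl
  · intro γ γ' h
    exact congrArg Prod.snd h
  · intro x
    constructor
    · intro h
      exact ⟨x.2, by rw [← h]⟩
    · rintro ⟨γ, rfl⟩
      rfl
  · intro f
    exact ⟨(f, fun _ _ => 0), rfl⟩
  · -- exactness at Hⁿ_RBf
    intro n hn f γ hf hγ hcoc hsum
    obtain ⟨m, rfl⟩ : ∃ m, n = m + 2 := ⟨n - 2, by omega⟩
    constructor
    · rintro ⟨g, hg, rfl⟩
      refine ⟨fun α a => γ α a - hRmap R (m + 1) g α a,
        isFamMulti_sub hγ (hRmap_isFamMulti R hg), ?_, ?_⟩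
      · funext α a
        show dRfam R (m + 1) (fun α a => γ α a - hRmap R (m + 1) g α a) α a = 0
        have h1 : dRfam R (m + 1) γ α a = - hRmap R (m + 2) (hochD (m + 1) g) α a :=
          eq_neg_of_add_eq_zero_left (congrFun (congrFun hsum α) a)
        have h2 : dRfam R (m + 1) (hRmap R (m + 1) g) α a
            = - hRmap R (m + 2) (hochD (m + 1) g) α a :=
          eq_neg_of_add_eq_zero_left (key_id R hRB m g hg.1 hg.2.1 α a)
        rw [dRfam_sub_pt, h1, h2, sub_self]
      · cases m with
        | zero =>
            exact ⟨g, hg, rfl, by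
              funext α a
              show γ α a - (γ α a - hRmap R 1 g α a) = hRmap R 1 g α a
              rw [sub_sub_cancel]⟩
        | succ m' =>
            refine ⟨g, fun _ _ => 0, hg, isFamMulti_zero, rfl, ?_⟩
            funext α a
            show γ α a - (γ α a - hRmap R (m' + 2) g α a)
              = dRfam R (m' + 1) (fun _ _ => 0) α a + hRmap R (m' + 2) g α a
            have h0 := congrFun (congrFun (dRfam_zero_fun R (m' + 1)) α) a
            rw [sub_sub_cancel, h0, zero_add]
    · rintro ⟨γ₀, hγ₀m, hγ₀coc, hcob⟩
      cases m with
      | zero =>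
          obtain ⟨f', hf', h1, h2⟩ := hcob
          exact ⟨f', hf', h1⟩
      | succ m' =>
          obtain ⟨f', γ', hf', hγ', h1, h2⟩ := hcob
          exact ⟨f', hf', h1⟩
  · -- exactness at Hⁿ_Hoch
    intro n hn f hf hcoc
    obtain ⟨m, rfl⟩ : ∃ m, n = m + 2 := ⟨n - 2, by omega⟩
    constructor
    · rintro ⟨γ'', hγ'', heq⟩
      refine ⟨f, fun α a => -γ'' α a, hf, isFamMulti_neg hγ'', hcoc, ?_, ?_⟩
      · funext α a
        show dRfam R (m + 1) (fun α a => -γ'' α a) α a + hRmap R (m + 2) f α a = 0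
        rw [dRfam_neg_pt, congrFun (congrFun heq α) a, neg_add_cancel]
      · rw [sub_self]
        exact ⟨fun _ => 0, isSeqMulti_zero (m + 1), (hochD_zero' (m + 1)).symm⟩
    · rintro ⟨f', γ', hf', hγ', hcoc', hsum', hcob'⟩
      obtain ⟨g, hg, hfg⟩ := hcob'
      refine ⟨fun α a => -γ' α a - hRmap R (m + 1) g α a,
        isFamMulti_sub (isFamMulti_neg hγ') (hRmap_isFamMulti R hg), ?_⟩
      funext α a
      show hRmap R (m + 2) f α a
        = dRfam R (m + 1) (fun α a => -γ' α a - hRmap R (m + 1) g α a) α a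
      have hff' : f = fun v => f' v + hochD (m + 1) g v := by
        funext v
        have hv := congrFun hfg v
        rw [Pi.sub_apply] at hv
        exact sub_eq_iff_eq_add'.mp hv
      rw [hff', hRmap_add_pt, dRfam_sub_pt, dRfam_neg_pt]
      have h1 : hRmap R (m + 2) f' α a = - dRfam R (m + 1) γ' α a :=
        eq_neg_of_add_eq_zero_right (congrFun (congrFun hsum' α) a)
      have h2 : hRmap R (m + 2) (hochD (m + 1) g) α a
          = - dRfam R (m + 1) (hRmap R (m + 1) g) α a :=
        eq_neg_of_add_eq_zero_right (key_id R hRB m g hg.1 hg.2.1 α a)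
      rw [h1, h2]
      abel
  · -- exactness at Hⁿ_R
    intro n hn γ hγ hcoc
    rcases n with _ | n'
    · omega
    cases n' with
    | zero =>
        constructor
        · rintro ⟨f', hf', h1, h2⟩
          refine ⟨f', hf', h1.symm, ?_⟩
          funext α a
          show γ α a - hRmap R 1 f' α a = (0 : A)
          have h2' : γ α a = hRmap R 1 f' α a := congrFun (congrFun h2 α) a
          rw [h2', sub_self]
        · rintro ⟨f, hf, hcoc', hcobfam⟩
          refine ⟨f, hf, hcoc'.symm, ?_⟩
          funext α a
          have h := congrFun (congrFun hcobfam α) a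
          exact sub_eq_zero.mp h
    | succ m' =>
        constructor
        · rintro ⟨f', γ', hf', hγ', h1, h2⟩
          refine ⟨f', hf', h1.symm, γ', hγ', ?_⟩
          funext α a
          show γ α a - hRmap R (m' + 2) f' α a = dRfam R (m' + 1) γ' α a
          have h2' : γ α a = dRfam R (m' + 1) γ' α a + hRmap R (m' + 2) f' α a :=
            congrFun (congrFun h2 α) a
          rw [h2']
          exact add_sub_cancel_right _ _
        · rintro ⟨f, hf, hcoc', γ', hγ', heq⟩
          refine ⟨f, γ', hf, hγ', hcoc'.symm, ?_⟩
          funext α a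
          show γ α a = dRfam R (m' + 1) γ' α a + hRmap R (m' + 2) f α a
          exact sub_eq_iff_eq_add.mp (congrFun (congrFun heq α) a)
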